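/- arXiv:1303.5321 — 6 statements merged into one kernel-verified Lean document; each statement's English description precedes it below -/
import Mathlib

section
/- Consider three user pairs with diagonal 2×2 channel matrices H_{i,k} = diag(h_{i,k}^{(1)}, h_{i,k}^{(2)}) having nonzero diagonal entries for all i, k ∈ {1,2,3}. Suppose vectors u_1, u_2, u_3, v_1, v_2, v_3 ∈ ℂ², each a nonzero vector, satisfy the six cross-channel alignment equations u_i† H_{i,k} v_k = 0 for all i ≠ k together with the three direct-channel conditions u_i† H_{i,i} v_i ≠ 0. Then every component of every u_i and every v_k is nonzero. -/
/-!
If `u i` had a vanishing component `l`, then `u i` would be a multiple of the other coordinate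
vector `e_l'`, and the two cross equations at receiver `i` would force `v j` and `v m`, the two
other transmit vectors, to be multiples of `e_l`. The direct condition at `j` then gives
`u j l ≠ 0`, so the cross equation between `j` and `m` reduces to the nonzero product
`conj (u j l) h_{j,m}^{(l)} v m l`. The statement for the `v k` follows by exchanging the roles
of transmitters and receivers.
-/

theorem Fin.sum_univ_two_of_ne {M : Type*} [AddCommMonoid M] {l l' : Fin 2} (hl : l ≠ l')
    (f : Fin 2 → M) : ∑ x, f x = f l + f l' := by
  fin_cases l <;> fin_cases l' <;> simp_all [Fin.sum_univ_two, add_comm]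

theorem Fin.apply_ne_zero_of_apply_eq_zero {M : Type*} [Zero M] {x : Fin 2 → M} (hx : x ≠ 0)
    {l l' : Fin 2} (hl : l ≠ l') (hxl : x l = 0) : x l' ≠ 0 := by
  intro hxl'
  refine hx (funext fun n => ?_)
  fin_cases l <;> fin_cases l' <;> fin_cases n <;> simp_all

variable {ι R : Type*} [CommSemiring R]

/-- Over `ℂ`, the receive filter enters as `a i l = conj (u i l)`. -/
structure IsAlignment (g : ι → ι → Fin 2 → R) (a b : ι → Fin 2 → R) : Prop where
  cross : ∀ i k, i ≠ k → ∑ l, a i l * g i k l * b k l = 0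
  direct : ∀ i, ∑ l, a i l * g i i l * b i l ≠ 0

namespace IsAlignment

variable {g : ι → ι → Fin 2 → R} {a b : ι → Fin 2 → R}

theorem transpose (hA : IsAlignment g a b) : IsAlignment (fun i k => g k i) b a where
  cross i k hik := by
    simpa only [mul_comm, mul_left_comm] using hA.cross k i hik.symm
  direct i := by
    simpa only [mul_comm, mul_left_comm] using hA.direct i

variable [NoZeroDivisors R]

theorem right_apply_eq_zero_of_left_apply_eq_zero (hA : IsAlignment g a b)
    (hg : ∀ i k l, g i k l ≠ 0) (ha : ∀ i, a i ≠ 0) {i k : ι} (hik : i ≠ k)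
    {l l' : Fin 2} (hl : l ≠ l') (hail : a i l = 0) : b k l' = 0 := by
  have hcross := hA.cross i k hik
  rw [Fin.sum_univ_two_of_ne hl, hail, zero_mul, zero_mul, zero_add] at hcross
  have hail' := Fin.apply_ne_zero_of_apply_eq_zero (ha i) hl hail
  simpa [hail', hg] using hcross

theorem not_right_apply_eq_zero_and_eq_zero (hA : IsAlignment g a b)
    (hg : ∀ i k l, g i k l ≠ 0) (hb : ∀ k, b k ≠ 0) {j m : ι} (hjm : j ≠ m)
    {l l' : Fin 2} (hl : l ≠ l') : ¬(b j l' = 0 ∧ b m l' = 0) := by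
  rintro ⟨hbj, hbm⟩
  have hbjl := Fin.apply_ne_zero_of_apply_eq_zero (hb j) hl.symm hbj
  have hbml := Fin.apply_ne_zero_of_apply_eq_zero (hb m) hl.symm hbm
  have hdirect := hA.direct j
  rw [Fin.sum_univ_two_of_ne hl, hbj, mul_zero, add_zero] at hdirect
  have hajl : a j l ≠ 0 := left_ne_zero_of_mul (left_ne_zero_of_mul hdirect)
  have hcross := hA.cross j m hjm
  rw [Fin.sum_univ_two_of_ne hl, hbm, mul_zero, add_zero] at hcross
  exact mul_ne_zero (mul_ne_zero hajl (hg j m l)) hbml hcross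

theorem left_apply_ne_zero (hA : IsAlignment g a b) (hg : ∀ i k l, g i k l ≠ 0)
    (ha : ∀ i, a i ≠ 0) (hb : ∀ k, b k ≠ 0) {i j m : ι}
    (hij : i ≠ j) (him : i ≠ m) (hjm : j ≠ m) (l : Fin 2) : a i l ≠ 0 := by
  obtain ⟨l', hl⟩ : ∃ l', l ≠ l' := ⟨l + 1, by fin_cases l <;> decide⟩
  intro hail
  exact hA.not_right_apply_eq_zero_and_eq_zero hg hb hjm hl
    ⟨hA.right_apply_eq_zero_of_left_apply_eq_zero hg ha hij hl hail,
      hA.right_apply_eq_zero_of_left_apply_eq_zero hg ha him hl hail⟩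

theorem right_apply_ne_zero (hA : IsAlignment g a b) (hg : ∀ i k l, g i k l ≠ 0)
    (ha : ∀ i, a i ≠ 0) (hb : ∀ k, b k ≠ 0) {k j m : ι}
    (hkj : k ≠ j) (hkm : k ≠ m) (hjm : j ≠ m) (l : Fin 2) : b k l ≠ 0 :=
  hA.transpose.left_apply_ne_zero (fun i k l => hg k i l) hb ha hkj hkm hjm l

end IsAlignment

/-- For three user pairs with diagonal 2×2 channels having nonzero
diagonal entries, if nonzero vectors `u i, v k ∈ ℂ²` satisfy the six cross-channel
alignment equations `uᵢ† H_{i,k} v_k = 0` for `i ≠ k` and the three direct-channel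
conditions `uᵢ† H_{i,i} v_i ≠ 0`, then every component of every `u i` and `v k`
is nonzero. -/
theorem alignment_components_nonzero
    (h : Fin 3 → Fin 3 → Fin 2 → ℂ)
    (hne : ∀ i k l, h i k l ≠ 0)
    (u v : Fin 3 → Fin 2 → ℂ)
    (hu : ∀ i, u i ≠ 0) (hv : ∀ k, v k ≠ 0)
    (halign : ∀ i k, i ≠ k →
      (starRingEnd ℂ) (u i 0) * h i k 0 * v k 0 +
        (starRingEnd ℂ) (u i 1) * h i k 1 * v k 1 = 0)
    (hdirect : ∀ i,
      (starRingEnd ℂ) (u i 0) * h i i 0 * v i 0 +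
        (starRingEnd ℂ) (u i 1) * h i i 1 * v i 1 ≠ 0) :
    (∀ i l, u i l ≠ 0) ∧ (∀ k l, v k l ≠ 0) := by
  have hA : IsAlignment h (fun i => star (u i)) v :=
    ⟨fun i k hik => by simpa [Fin.sum_univ_two] using halign i k hik,
     fun i => by simpa [Fin.sum_univ_two] using hdirect i⟩
  have hu' : ∀ i, star (u i) ≠ 0 := fun i => star_ne_zero.mpr (hu i)
  have hdistinct : ∀ i : Fin 3, i ≠ i + 1 ∧ i ≠ i + 2 ∧ i + 1 ≠ i + 2 := by decide
  refine ⟨fun i l => ?_, fun k l => ?_⟩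
  · obtain ⟨h1, h2, h12⟩ := hdistinct i
    simpa using hA.left_apply_ne_zero hne hu' hv h1 h2 h12 l
  · obtain ⟨h1, h2, h12⟩ := hdistinct k
    exact hA.right_apply_ne_zero hne hu' hv h1 h2 h12 l
end

section
/- Consider three user pairs with nonzero complex cross-channel coefficients h_{i,k}^{(1)}, h_{i,k}^{(2)} for all ordered pairs i ≠ k in {1,2,3}. There exist vectors u_1, u_2, u_3, v_1, v_2, v_3 ∈ ℂ² with all components nonzero satisfying the six alignment equations conj(u_i^{(1)})·h_{i,k}^{(1)}·v_k^{(1)} + conj(u_i^{(2)})·h_{i,k}^{(2)}·v_k^{(2)} = 0 for all i ≠ k, if and only if the channel coefficients satisfy (h_{1,2}^{(2)}/h_{1,2}^{(1)})·(h_{1,3}^{(1)}/h_{1,3}^{(2)})·(h_{2,3}^{(2)}/h_{2,3}^{(1)})·(h_{2,1}^{(1)}/h_{2,1}^{(2)})·(h_{3,1}^{(2)}/h_{3,1}^{(1)})·(h_{3,2}^{(1)}/h_{3,2}^{(2)}) = 1. -/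
/-!
Write `α i`, `β k` and `r i k` for the ratios of second to first component of `conj u_i`, `v_k`
and `h_{i,k}`. When all components are nonzero, the alignment equation for `(i, k)` reads
`α i * r i k * β k = -1`. The six pairs `i ≠ k` are the edges of the hexagon
`α₀ β₁ α₂ β₀ α₁ β₂`, so the alternating product of the equations around it eliminates every
unknown and leaves `r₀₁ r₁₂ r₂₀ = r₀₂ r₂₁ r₁₀`, which is the stated condition. Conversely, the
unknowns can be solved for one at a time along five edges of the hexagon, and the sixth equation
is then the condition.
-/

variable {K : Type*} [Field K]

theorem add_mul_eq_zero_iff_div_mul_div_mul_div_eq_neg_one {a₀ a₁ c₀ c₁ b₀ b₁ : K}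
    (ha : a₀ ≠ 0) (hc : c₀ ≠ 0) (hb : b₀ ≠ 0) :
    a₀ * c₀ * b₀ + a₁ * c₁ * b₁ = 0 ↔ a₁ / a₀ * (c₁ / c₀) * (b₁ / b₀) = -1 := by
  rw [div_mul_div_comm, div_mul_div_comm, div_eq_iff (by positivity),
    add_eq_zero_iff_eq_neg', neg_one_mul]

theorem exists_aligning_vectors_iff_exists_ratios {ι : Type*} [Nontrivial ι]
    (σ : K →+* K) [RingHomSurjective σ] (c : ι → ι → Fin 2 → K)
    (hc : ∀ i k, i ≠ k → c i k 0 ≠ 0) :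
    (∃ u v : ι → Fin 2 → K, (∀ i l, u i l ≠ 0) ∧ (∀ k l, v k l ≠ 0) ∧
      ∀ i k, i ≠ k → σ (u i 0) * c i k 0 * v k 0 + σ (u i 1) * c i k 1 * v k 1 = 0) ↔
    ∃ α β : ι → K, ∀ i k, i ≠ k → α i * (c i k 1 / c i k 0) * β k = -1 := by
  constructor
  · rintro ⟨u, v, hu, hv, huv⟩
    refine ⟨fun i => σ (u i 1) / σ (u i 0), fun k => v k 1 / v k 0, fun i k hik => ?_⟩
    exact (add_mul_eq_zero_iff_div_mul_div_mul_div_eq_neg_one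
      ((map_ne_zero σ).2 (hu i 0)) (hc i k hik) (hv k 0)).1 (huv i k hik)
  · rintro ⟨α, β, hαβ⟩
    have hα : ∀ i, α i ≠ 0 := fun i hi => by
      obtain ⟨k, hki⟩ := exists_ne i
      simpa [hi] using hαβ i k hki.symm
    have hβ : ∀ k, β k ≠ 0 := fun k hk => by
      obtain ⟨i, hik⟩ := exists_ne k
      simpa [hk] using hαβ i k hik
    have hσ := RingHomSurjective.is_surjective (σ := σ)
    refine ⟨fun i l => Function.surjInv hσ (![1, α i] l), fun k => ![1, β k],
      fun i l => ?_, fun k l => ?_, fun i k hik => ?_⟩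
    · rw [← map_ne_zero σ, Function.surjInv_eq hσ]
      fin_cases l <;> simp [hα]
    · fin_cases l <;> simp [hβ]
    · simp only [Function.surjInv_eq, Matrix.cons_val_zero, Matrix.cons_val_one]
      rw [add_mul_eq_zero_iff_div_mul_div_mul_div_eq_neg_one one_ne_zero (hc i k hik) one_ne_zero]
      simpa using hαβ i k hik

theorem exists_mul_mul_eq_neg_one_iff_cycle_eq (r : Fin 3 → Fin 3 → K)
    (hr : ∀ i k, i ≠ k → r i k ≠ 0) :
    (∃ α β : Fin 3 → K, ∀ i k, i ≠ k → α i * r i k * β k = -1) ↔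
      r 0 1 * r 1 2 * r 2 0 = r 0 2 * r 2 1 * r 1 0 := by
  constructor
  · rintro ⟨α, β, hαβ⟩
    have cycle₁ : (α 0 * α 1 * α 2 * β 0 * β 1 * β 2) * (r 0 1 * r 1 2 * r 2 0) = -1 := by
      linear_combination (α 1 * r 1 2 * β 2 * (α 2 * r 2 0 * β 0)) * hαβ 0 1 (by decide)
        - (α 2 * r 2 0 * β 0) * hαβ 1 2 (by decide) + hαβ 2 0 (by decide)
    have cycle₂ : (α 0 * α 1 * α 2 * β 0 * β 1 * β 2) * (r 0 2 * r 2 1 * r 1 0) = -1 := by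
      linear_combination (α 2 * r 2 1 * β 1 * (α 1 * r 1 0 * β 0)) * hαβ 0 2 (by decide)
        - (α 1 * r 1 0 * β 0) * hαβ 2 1 (by decide) + hαβ 1 0 (by decide)
    exact mul_left_cancel₀ (left_ne_zero_of_mul (cycle₁.trans_ne (by norm_num)))
      (cycle₁.trans cycle₂.symm)
  · intro hcycle
    have h01 := hr 0 1 (by decide); have h02 := hr 0 2 (by decide)
    have h10 := hr 1 0 (by decide); have h12 := hr 1 2 (by decide)
    have h20 := hr 2 0 (by decide); have h21 := hr 2 1 (by decide)
    -- `β 0 = 1`; solve the equations for `(1,0), (2,0), (2,1), (1,2), (0,1)` in turn.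
    refine ⟨![-r 2 1 / (r 0 1 * r 2 0), -1 / r 1 0, -1 / r 2 0],
      ![1, r 2 0 / r 2 1, r 1 0 / r 1 2], fun i k hik => ?_⟩
    fin_cases i <;> fin_cases k <;> simp at hik ⊢ <;> field_simp
    linear_combination hcycle

/-- For three user pairs with nonzero cross-channel coefficients,
vectors `u_i, v_k ∈ ℂ²` with all components nonzero satisfying the six alignment
equations exist, if and only if the product of cross-channel coefficient ratios
`(h₁₂⁽²⁾/h₁₂⁽¹⁾)(h₁₃⁽¹⁾/h₁₃⁽²⁾)(h₂₃⁽²⁾/h₂₃⁽¹⁾)(h₂₁⁽¹⁾/h₂₁⁽²⁾)(h₃₁⁽²⁾/h₃₁⁽¹⁾)(h₃₂⁽¹⁾/h₃₂⁽²⁾)`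
equals 1. (Users are indexed by `0, 1, 2` and subcarriers by `0, 1`.) -/
theorem alignment_feasibility_three_users
    (h : Fin 3 → Fin 3 → Fin 2 → ℂ)
    (hne : ∀ i k l, i ≠ k → h i k l ≠ 0) :
    (∃ u v : Fin 3 → Fin 2 → ℂ,
      (∀ i l, u i l ≠ 0) ∧ (∀ k l, v k l ≠ 0) ∧
      (∀ i k, i ≠ k →
        (starRingEnd ℂ) (u i 0) * h i k 0 * v k 0 +
          (starRingEnd ℂ) (u i 1) * h i k 1 * v k 1 = 0)) ↔
    (h 0 1 1 / h 0 1 0) * (h 0 2 0 / h 0 2 1) *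
      (h 1 2 1 / h 1 2 0) * (h 1 0 0 / h 1 0 1) *
      (h 2 0 1 / h 2 0 0) * (h 2 1 0 / h 2 1 1) = 1 := by
  rw [exists_aligning_vectors_iff_exists_ratios _ h fun i k hik => hne i k 0 hik,
    exists_mul_mul_eq_neg_one_iff_cycle_eq _ fun i k hik =>
      div_ne_zero (hne i k 1 hik) (hne i k 0 hik)]
  field_simp [hne]
end

section
/- Let τ_{i,k} ∈ ℝ for i, k ∈ {1,2,3}, let A_{i,k} > 0, let f1 ≠ f2 be real subcarrier frequencies, and set h_{i,k}^{(l)} = A_{i,k}·exp(−2π·i·f_l·τ_{i,k}) for l ∈ {1,2}. Then the three-user feasibility condition (h_{1,2}^{(2)}/h_{1,2}^{(1)})·(h_{1,3}^{(1)}/h_{1,3}^{(2)})·(h_{2,3}^{(2)}/h_{2,3}^{(1)})·(h_{2,1}^{(1)}/h_{2,1}^{(2)})·(h_{3,1}^{(2)}/h_{3,1}^{(1)})·(h_{3,2}^{(1)}/h_{3,2}^{(2)}) = 1 holds if and only if (f2 − f1)·(τ_{1,3} − τ_{1,2} + τ_{2,1} − τ_{2,3} + τ_{3,2} − τ_{3,1})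 is an integer (necessarily nonzero when τ_{1,3} − τ_{1,2} + τ_{2,1} − τ_{2,3} + τ_{3,2} − τ_{3,1} ≠ 0). -/
open Real Complex

/-! The amplitudes cancel in every ratio, leaving a pure phase `exp (2πi (f - f') τ)`; the six
phases multiply to `exp (2πi (f2 - f1) S)` with `S` the signed delay sum, which is `1` exactly when
`(f2 - f1) S` is an integer. -/

theorem exp_two_pi_I_mul_ofReal_eq_one_iff (x : ℝ) :
    exp (2 * π * I * x) = 1 ↔ ∃ n : ℤ, x = n := by
  have h2πI : 2 * (π : ℂ) * I ≠ 0 := by simp [Real.pi_ne_zero, I_ne_zero]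
  rw [Complex.exp_eq_one_iff]
  refine exists_congr fun n => ?_
  rw [mul_comm _ (x : ℂ), mul_left_inj' h2πI]
  exact_mod_cast Iff.rfl

theorem los_channel_div {A : ℂ} (hA : A ≠ 0) (f g t : ℝ) :
    A * exp (-(2 * π * I) * f * t) / (A * exp (-(2 * π * I) * g * t)) =
      exp (2 * π * I * ((g - f) * t : ℝ)) := by
  rw [mul_div_mul_left _ _ hA, ← Complex.exp_sub]
  push_cast
  ring_nf

/-- For line-of-sight channels
`h_{i,k}^{(l)} = A_{i,k}·exp(−2π·i·f_l·τ_{i,k})` with positive amplitudes and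
`f1 ≠ f2`, the three-user feasibility condition (product of cross-channel
ratios equal to 1) holds if and only if
`(f2 − f1)·(τ_{1,3} − τ_{1,2} + τ_{2,1} − τ_{2,3} + τ_{3,2} − τ_{3,1})` is an
integer; this number is necessarily nonzero when the delay combination is
nonzero. (Users are indexed by `0, 1, 2` and subcarriers by `0, 1`.) -/
theorem los_feasibility_iff_integer
    (τ : Fin 3 → Fin 3 → ℝ) (A : Fin 3 → Fin 3 → ℝ) (hA : ∀ i k, 0 < A i k)
    (f1 f2 : ℝ) (hf : f1 ≠ f2)
    (h : Fin 3 → Fin 3 → Fin 2 → ℂ)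
    (hdef : ∀ i k l, h i k l = (A i k : ℂ) *
      Complex.exp (-(2 * (Real.pi : ℂ) * Complex.I) *
        (if l = 0 then (f1 : ℂ) else (f2 : ℂ)) * (τ i k : ℂ))) :
    ((h 0 1 1 / h 0 1 0) * (h 0 2 0 / h 0 2 1) *
        (h 1 2 1 / h 1 2 0) * (h 1 0 0 / h 1 0 1) *
        (h 2 0 1 / h 2 0 0) * (h 2 1 0 / h 2 1 1) = 1 ↔
      ∃ n : ℤ, (f2 - f1) * (τ 0 2 - τ 0 1 + τ 1 0 - τ 1 2 + τ 2 1 - τ 2 0) = n) ∧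
    (τ 0 2 - τ 0 1 + τ 1 0 - τ 1 2 + τ 2 1 - τ 2 0 ≠ 0 →
      (f2 - f1) * (τ 0 2 - τ 0 1 + τ 1 0 - τ 1 2 + τ 2 1 - τ 2 0) ≠ 0) := by
  have hA' : ∀ i k, (A i k : ℂ) ≠ 0 := fun i k => ofReal_ne_zero.mpr (hA i k).ne'
  have hprod : (h 0 1 1 / h 0 1 0) * (h 0 2 0 / h 0 2 1) *
      (h 1 2 1 / h 1 2 0) * (h 1 0 0 / h 1 0 1) *
      (h 2 0 1 / h 2 0 0) * (h 2 1 0 / h 2 1 1) =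
        exp (2 * π * I * ((f2 - f1) * (τ 0 2 - τ 0 1 + τ 1 0 - τ 1 2 + τ 2 1 - τ 2 0) : ℝ)) := by
    simp only [hdef, Fin.isValue, if_true, one_ne_zero, if_false, los_channel_div (hA' _ _),
      ← Complex.exp_add]
    congr 1
    push_cast
    ring
  refine ⟨?_, mul_ne_zero (sub_ne_zero.mpr hf.symm)⟩
  rw [hprod, exp_two_pi_I_mul_ofReal_eq_one_iff]
end

section
/- Fix delays τ_{i,k} ∈ ℝ for i, k ∈ {1,2,3} with Σ := τ_{1,3} − τ_{1,2} + τ_{2,1} − τ_{2,3} + τ_{3,2} − τ_{3,1} ≠ 0, amplitudes A_{i,k} > 0, a nonzero integer n, subcarrier spacing Δf = n/Σ, and frequencies f^{(1)}, f^{(2)} = f^{(1)} + Δf, and set h_{i,k}^{(l)} = A_{i,k}·exp(−2π·i·f^{(l)}·τ_{i,k}). Then there exist vectors u_1, u_2, u_3, v_1, v_2, v_3 ∈ ℂ², each component of modulus 1/√2, satisfying the six alignment equations u_i† H_{i,k} v_k = 0 for all i ≠ k, such that the effective direct-channel amplitudes are |u_1† H_{1,1} v_1| = A_{1,1}·|sin(π·Δf·Δτ_1)|,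 |u_2† H_{2,2} v_2| = A_{2,2}·|sin(π·Δf·Δτ_2)|, and |u_3† H_{3,3} v_3| = A_{3,3}·|sin(π·Δf·Δτ_3)|, where Δτ_1 = −τ_{1,1} + τ_{2,1} − τ_{2,3} + τ_{1,3}, Δτ_2 = −τ_{2,2} + τ_{2,3} − τ_{1,3} + τ_{1,2}, and Δτ_3 = −τ_{3,3} + τ_{3,2} − τ_{1,2} + τ_{1,3}. -/
/-!
Take `u_i = (1, e^{iψ_i})/√2` and `v_k = (1, e^{iφ_k})/√2`. Then
`u_i† H_{i,k} v_k = (A_{i,k}/2) e^{-2πi f₁ τ_{i,k}} (1 + e^{iθ_{i,k}})` with phase gap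
`θ_{i,k} = φ_k − ψ_i − 2πΔf τ_{i,k}`, so the link is aligned exactly when
`θ_{i,k} ≡ π (mod 2π)`.
The six cross links form a single cycle in the bipartite graph of receivers and transmitters,
so five phase differences can be fixed freely along a path, and the sixth equation holds iff
`2πΔf Σ ∈ 2πℤ`, which is the choice `Δf = n/Σ`. On a direct link the gap is then
`π + 2πΔf Δτ_i (mod 2π)`, and `|1 − e^{2ix}| = 2|sin x|`.
-/

open Complex

-- `effectiveGain u v g` is `u† diag(g) v`.
noncomputable def effectiveGain (u v g : Fin 2 → ℂ) : ℂ :=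
  starRingEnd ℂ (u 0) * g 0 * v 0 + starRingEnd ℂ (u 1) * g 1 * v 1

noncomputable def phaseVec (ψ : ℝ) : Fin 2 → ℂ :=
  ![((Real.sqrt 2)⁻¹ : ℝ), ((Real.sqrt 2)⁻¹ : ℝ) * exp (ψ * I)]

noncomputable def losChannel (A f₁ f₂ τ : ℝ) : Fin 2 → ℂ := fun l =>
  A * exp (-(2 * Real.pi * I) * (if l = 0 then (f₁ : ℂ) else f₂) * τ)

theorem norm_phaseVec (ψ : ℝ) (l : Fin 2) : ‖phaseVec ψ l‖ = 1 / Real.sqrt 2 := by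
  fin_cases l <;> simp [phaseVec, norm_exp_ofReal_mul_I]

theorem effectiveGain_phaseVec_losChannel (A f₁ f₂ τ ψ φ : ℝ) :
    effectiveGain (phaseVec ψ) (phaseVec φ) (losChannel A f₁ f₂ τ) =
      A / 2 * exp (-(2 * Real.pi * I) * f₁ * τ) *
        (1 + exp ((φ - ψ - 2 * Real.pi * (f₂ - f₁) * τ : ℝ) * I)) := by
  have hsqrt : (((Real.sqrt 2)⁻¹ : ℝ) : ℂ) * ((Real.sqrt 2)⁻¹ : ℝ) = 1 / 2 := by
    rw [← ofReal_mul, ← mul_inv, Real.mul_self_sqrt zero_le_two]; norm_num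
  have hphase : exp (ψ * -I) * exp (-(2 * Real.pi * I) * f₂ * τ) * exp (φ * I) =
      exp (-(2 * Real.pi * I) * f₁ * τ) *
        exp ((φ - ψ - 2 * Real.pi * (f₂ - f₁) * τ : ℝ) * I) := by
    rw [← exp_add, ← exp_add, ← exp_add]; congr 1; push_cast; ring
  simp only [effectiveGain, phaseVec, losChannel, Matrix.cons_val_zero, Matrix.cons_val_one,
    one_ne_zero, if_true, if_false, map_mul, ← exp_conj, conj_ofReal, conj_I]
  linear_combination (A * exp (-(2 * Real.pi * I) * f₁ * τ) +
      A * exp (ψ * -I) * exp (-(2 * Real.pi * I) * f₂ * τ) * exp (φ * I)) * hsqrt +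
    A / 2 * hphase

theorem exp_mul_I_eq_neg_of_eq_add_odd_mul_pi {θ x : ℝ} (m : ℤ)
    (hθ : θ = 2 * x + (2 * m + 1) * Real.pi) :
    exp (θ * I) = -exp (I * (2 * x : ℝ)) := by
  have : θ * I = I * (2 * x : ℝ) + Real.pi * I + m * (2 * Real.pi * I) := by
    rw [hθ]; push_cast; ring
  rw [this, exp_add, exp_add, exp_pi_mul_I, exp_int_mul_two_pi_mul_I]; ring

theorem norm_effectiveGain_of_phase_eq {A f₁ f₂ τ ψ φ x : ℝ} (hA : 0 ≤ A) (m : ℤ)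
    (hθ : φ - ψ - 2 * Real.pi * (f₂ - f₁) * τ = 2 * x + (2 * m + 1) * Real.pi) :
    ‖effectiveGain (phaseVec ψ) (phaseVec φ) (losChannel A f₁ f₂ τ)‖ = A * |Real.sin x| := by
  have hunit : ‖exp (-(2 * Real.pi * I) * f₁ * τ)‖ = 1 := by
    rw [norm_exp]; simp
  rw [effectiveGain_phaseVec_losChannel, exp_mul_I_eq_neg_of_eq_add_odd_mul_pi m hθ,
    ← sub_eq_add_neg, norm_mul, norm_mul, hunit, norm_sub_rev, norm_exp_I_mul_ofReal_sub_one]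
  simp only [Complex.norm_div, norm_real, Real.norm_eq_abs, abs_of_nonneg hA, norm_ofNat,
    norm_mul, mul_one, abs_two, mul_div_cancel_left₀ x two_ne_zero]
  ring

theorem effectiveGain_eq_zero_of_phase_eq {A f₁ f₂ τ ψ φ : ℝ} (m : ℤ)
    (hθ : φ - ψ - 2 * Real.pi * (f₂ - f₁) * τ = (2 * m + 1) * Real.pi) :
    effectiveGain (phaseVec ψ) (phaseVec φ) (losChannel A f₁ f₂ τ) = 0 := by
  rw [effectiveGain_phaseVec_losChannel,
    exp_mul_I_eq_neg_of_eq_add_odd_mul_pi (x := 0) m (by rw [hθ]; ring)]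
  simp

-- Propagated along the cycle r₀ – t₁ – r₂ – t₀ – r₁ – t₂ – r₀ of cross links, starting from
-- ψ₀ = 0, so that every cross-link phase gap is π except on the closing link (2,1), where it is
-- π − a·Σ.
noncomputable def rxPhase (a : ℝ) (τ : Fin 3 → Fin 3 → ℝ) : Fin 3 → ℝ :=
  ![0, a * (τ 0 2 - τ 1 2), a * (τ 1 0 + τ 0 2 - τ 1 2 - τ 2 0)]

noncomputable def txPhase (a : ℝ) (τ : Fin 3 → Fin 3 → ℝ) : Fin 3 → ℝ :=
  ![Real.pi + a * (τ 1 0 + τ 0 2 - τ 1 2), Real.pi + a * τ 0 1, Real.pi + a * τ 0 2]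

theorem txPhase_sub_rxPhase_of_ne {a : ℝ} {τ : Fin 3 → Fin 3 → ℝ} {n : ℤ}
    (hcycle : a * (τ 0 2 - τ 0 1 + τ 1 0 - τ 1 2 + τ 2 1 - τ 2 0) = 2 * Real.pi * n)
    {i k : Fin 3} (hik : i ≠ k) :
    ∃ m : ℤ, txPhase a τ k - rxPhase a τ i - a * τ i k = (2 * m + 1) * Real.pi := by
  fin_cases i <;> fin_cases k <;>
    simp only [txPhase, rxPhase, Fin.reduceFinMk, Matrix.cons_val, Fin.isValue] <;> first
    | exact absurd rfl hik
    | (refine ⟨0, ?_⟩; ring1)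
    | (refine ⟨-n, ?_⟩; push_cast; linear_combination (-1 : ℝ) * hcycle)

theorem los_effective_amplitudes_general
    (τ : Fin 3 → Fin 3 → ℝ) (A : Fin 3 → Fin 3 → ℝ) (hA : ∀ i k, 0 < A i k)
    (S : ℝ) (hS : S = τ 0 2 - τ 0 1 + τ 1 0 - τ 1 2 + τ 2 1 - τ 2 0) (hS0 : S ≠ 0)
    (n : ℤ) (Δf f1 f2 : ℝ) (hΔf : Δf = n / S) (hf2 : f2 = f1 + Δf)
    (h : Fin 3 → Fin 3 → Fin 2 → ℂ)
    (hdef : ∀ i k l, h i k l = (A i k : ℂ) *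
      Complex.exp (-(2 * (Real.pi : ℂ) * Complex.I) *
        (if l = 0 then (f1 : ℂ) else (f2 : ℂ)) * (τ i k : ℂ))) :
    ∃ u v : Fin 3 → Fin 2 → ℂ,
      (∀ i l, ‖u i l‖ = 1 / Real.sqrt 2) ∧
      (∀ k l, ‖v k l‖ = 1 / Real.sqrt 2) ∧
      (∀ i k, i ≠ k →
        (starRingEnd ℂ) (u i 0) * h i k 0 * v k 0 +
          (starRingEnd ℂ) (u i 1) * h i k 1 * v k 1 = 0) ∧
      ‖((starRingEnd ℂ) (u 0 0) * h 0 0 0 * v 0 0 +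
          (starRingEnd ℂ) (u 0 1) * h 0 0 1 * v 0 1)‖ =
        A 0 0 * |Real.sin (Real.pi * Δf * (-τ 0 0 + τ 1 0 - τ 1 2 + τ 0 2))| ∧
      ‖((starRingEnd ℂ) (u 1 0) * h 1 1 0 * v 1 0 +
          (starRingEnd ℂ) (u 1 1) * h 1 1 1 * v 1 1)‖ =
        A 1 1 * |Real.sin (Real.pi * Δf * (-τ 1 1 + τ 1 2 - τ 0 2 + τ 0 1))| ∧
      ‖((starRingEnd ℂ) (u 2 0) * h 2 2 0 * v 2 0 +
          (starRingEnd ℂ) (u 2 1) * h 2 2 1 * v 2 1)‖ =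
        A 2 2 * |Real.sin (Real.pi * Δf * (-τ 2 2 + τ 2 1 - τ 0 1 + τ 0 2))| := by
  obtain rfl : h = fun i k => losChannel (A i k) f1 f2 (τ i k) :=
    funext fun i => funext fun k => funext (hdef i k)
  subst hf2
  have hcycle : 2 * Real.pi * Δf * (τ 0 2 - τ 0 1 + τ 1 0 - τ 1 2 + τ 2 1 - τ 2 0) =
      2 * Real.pi * n := by
    rw [← hS, hΔf, mul_assoc, div_mul_cancel₀ _ hS0]
  refine ⟨fun i => phaseVec (rxPhase (2 * Real.pi * Δf) τ i),
    fun k => phaseVec (txPhase (2 * Real.pi * Δf) τ k),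
    fun _ => norm_phaseVec _, fun _ => norm_phaseVec _, fun i k hik => ?_, ?_, ?_, ?_⟩
  · obtain ⟨m, hm⟩ := txPhase_sub_rxPhase_of_ne hcycle hik
    exact effectiveGain_eq_zero_of_phase_eq m (by rw [← hm]; ring)
  · exact norm_effectiveGain_of_phase_eq (hA 0 0).le 0 (by
      simp only [txPhase, rxPhase, Matrix.cons_val]; ring)
  · exact norm_effectiveGain_of_phase_eq (hA 1 1).le 0 (by
      simp only [txPhase, rxPhase, Matrix.cons_val]; ring)
  · exact norm_effectiveGain_of_phase_eq (hA 2 2).le (-n) (by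
      simp only [txPhase, rxPhase, Matrix.cons_val]; push_cast
      linear_combination (-1 : ℝ) * hcycle)

/-- For line-of-sight channels with delays `τ_{i,k}`, amplitudes
`A_{i,k} > 0`, delay combination `S ≠ 0`, subcarrier spacing `Δf = n/S` for a
nonzero integer `n`, and frequencies `f1`, `f2 = f1 + Δf`, there exist
precoders and receive filters whose components all have modulus `1/√2`,
satisfying the six alignment equations, whose effective direct-channel
amplitudes are `A_{i,i}·|sin(π·Δf·Δτ_i)|`.
(Users are indexed by `0, 1, 2` and subcarriers by `0, 1`.) -/
theorem los_effective_amplitudes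
    (τ : Fin 3 → Fin 3 → ℝ) (A : Fin 3 → Fin 3 → ℝ) (hA : ∀ i k, 0 < A i k)
    (S : ℝ) (hS : S = τ 0 2 - τ 0 1 + τ 1 0 - τ 1 2 + τ 2 1 - τ 2 0) (hS0 : S ≠ 0)
    (n : ℤ) (hn : n ≠ 0) (Δf f1 f2 : ℝ) (hΔf : Δf = n / S) (hf2 : f2 = f1 + Δf)
    (h : Fin 3 → Fin 3 → Fin 2 → ℂ)
    (hdef : ∀ i k l, h i k l = (A i k : ℂ) *
      Complex.exp (-(2 * (Real.pi : ℂ) * Complex.I) *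
        (if l = 0 then (f1 : ℂ) else (f2 : ℂ)) * (τ i k : ℂ))) :
    ∃ u v : Fin 3 → Fin 2 → ℂ,
      (∀ i l, ‖u i l‖ = 1 / Real.sqrt 2) ∧
      (∀ k l, ‖v k l‖ = 1 / Real.sqrt 2) ∧
      (∀ i k, i ≠ k →
        (starRingEnd ℂ) (u i 0) * h i k 0 * v k 0 +
          (starRingEnd ℂ) (u i 1) * h i k 1 * v k 1 = 0) ∧
      ‖((starRingEnd ℂ) (u 0 0) * h 0 0 0 * v 0 0 +
          (starRingEnd ℂ) (u 0 1) * h 0 0 1 * v 0 1)‖ =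
        A 0 0 * |Real.sin (Real.pi * Δf * (-τ 0 0 + τ 1 0 - τ 1 2 + τ 0 2))| ∧
      ‖((starRingEnd ℂ) (u 1 0) * h 1 1 0 * v 1 0 +
          (starRingEnd ℂ) (u 1 1) * h 1 1 1 * v 1 1)‖ =
        A 1 1 * |Real.sin (Real.pi * Δf * (-τ 1 1 + τ 1 2 - τ 0 2 + τ 0 1))| ∧
      ‖((starRingEnd ℂ) (u 2 0) * h 2 2 0 * v 2 0 +
          (starRingEnd ℂ) (u 2 1) * h 2 2 1 * v 2 1)‖ =
        A 2 2 * |Real.sin (Real.pi * Δf * (-τ 2 2 + τ 2 1 - τ 0 1 + τ 0 2))| :=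
  los_effective_amplitudes_general τ A hA S hS hS0 n Δf f1 f2 hΔf hf2 h hdef
end

section
/- Fix delays τ_{i,k} ∈ ℝ for i, k ∈ {1,2,3}, amplitudes A_{i,k} > 0, frequencies f^{(1)} ≠ f^{(2)} with spacing Δf = f^{(2)} − f^{(1)}, and channels h_{i,k}^{(l)} = A_{i,k}·exp(−2π·i·f^{(l)}·τ_{i,k}). Suppose nonzero complex numbers a_1, a_2, a_3, b_1, b_2, b_3 are such that the constant vectors u_i = (a_i, a_i) and v_k = (b_k, b_k) satisfy the alignment equations u_i† H_{i,k} v_k = 0 for all i ≠ k. Then for every pair i ≠ k one has exp(−2π·i·Δf·τ_{i,k}) = −1; equivalently 2·Δf·τ_{i,k} is an odd integer, i.e., Δf = (1 + 2·n_{i,k})/(2·τ_{i,k}) for some integer n_{i,k} whenever τ_{i,k} ≠ 0. -/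
/-!
Time-based alignment makes every cross term `conj a_i · (h^{(1)}_{i,k} + h^{(2)}_{i,k}) · b_k`
vanish, so the two line-of-sight channels of a link cancel: `h^{(2)}_{i,k} = -h^{(1)}_{i,k}`.
Their quotient is `exp(−2π·i·Δf·τ_{i,k})`, hence equals `-1`, which happens exactly when
`2·Δf·τ_{i,k}` is an odd integer.
-/

open Complex
open scoped Real

theorem add_eq_zero_of_mul_mul_add_mul_mul_eq_zero {K : Type*} [Field K] {c p q b : K}
    (hc : c ≠ 0) (hb : b ≠ 0) (h : c * p * b + c * q * b = 0) : p + q = 0 := by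
  have hprod : c * (p + q) * b = 0 := by linear_combination h
  simpa [hc, hb] using hprod

theorem exp_sub_eq_neg_one_of_mul_exp_add_mul_exp_eq_zero {A z₁ z₂ : ℂ} (hA : A ≠ 0)
    (h : A * exp z₁ + A * exp z₂ = 0) : exp (z₂ - z₁) = -1 := by
  have hexp : exp z₂ = -exp z₁ := by
    have hsum : A * (exp z₁ + exp z₂) = 0 := by linear_combination h
    linear_combination (mul_eq_zero.1 hsum).resolve_left hA
  rw [exp_sub, hexp, neg_div, div_self (exp_ne_zero z₁)]

theorem exists_int_two_mul_eq_of_exp_neg_two_pi_I_mul_eq_neg_one {x : ℝ}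
    (h : exp (-(2 * π * I) * x) = -1) : ∃ m : ℤ, 2 * x = 2 * m + 1 := by
  rw [← exp_pi_mul_I, exp_eq_exp_iff_exists_int] at h
  obtain ⟨n, hn⟩ := h
  refine ⟨-n - 1, ?_⟩
  have hcomplex : (π * I : ℂ) * (2 * x) = π * I * (2 * (-n - 1 : ℤ) + 1) := by
    push_cast
    linear_combination -hn
  exact_mod_cast mul_left_cancel₀ (mul_ne_zero (ofReal_ne_zero.2 Real.pi_ne_zero) I_ne_zero)
    hcomplex

theorem time_based_IA_spacing_general
    (τ : Fin 3 → Fin 3 → ℝ) (A : Fin 3 → Fin 3 → ℝ) (hA : ∀ i k, 0 < A i k)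
    (f1 f2 : ℝ) (Δf : ℝ) (hΔf : Δf = f2 - f1)
    (h : Fin 3 → Fin 3 → Fin 2 → ℂ)
    (hdef : ∀ i k l, h i k l = (A i k : ℂ) *
      Complex.exp (-(2 * (Real.pi : ℂ) * Complex.I) *
        (if l = 0 then (f1 : ℂ) else (f2 : ℂ)) * (τ i k : ℂ)))
    (a b : Fin 3 → ℂ) (ha : ∀ i, a i ≠ 0) (hb : ∀ k, b k ≠ 0)
    (halign : ∀ i k, i ≠ k →
      (starRingEnd ℂ) (a i) * h i k 0 * b k +
        (starRingEnd ℂ) (a i) * h i k 1 * b k = 0) :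
    ∀ i k, i ≠ k →
      Complex.exp (-(2 * (Real.pi : ℂ) * Complex.I) * (Δf : ℂ) * (τ i k : ℂ)) = -1 ∧
      (∃ m : ℤ, 2 * Δf * τ i k = 2 * m + 1) ∧
      (τ i k ≠ 0 → ∃ m : ℤ, Δf = (1 + 2 * m) / (2 * τ i k)) := by
  intro i k hik
  have hcancel : h i k 0 + h i k 1 = 0 :=
    add_eq_zero_of_mul_mul_add_mul_mul_eq_zero (by simpa using ha i) (hb k) (halign i k hik)
  have hexp : exp (-(2 * (π : ℂ) * I) * (Δf : ℂ) * (τ i k : ℂ)) = -1 := by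
    have hA' : (A i k : ℂ) ≠ 0 := by exact_mod_cast (hA i k).ne'
    rw [hdef, hdef] at hcancel
    convert exp_sub_eq_neg_one_of_mul_exp_add_mul_exp_eq_zero hA' hcancel using 2
    simp only [hΔf, Fin.one_eq_zero_iff, if_true]
    push_cast
    ring
  obtain ⟨m, hm⟩ := exists_int_two_mul_eq_of_exp_neg_two_pi_I_mul_eq_neg_one
    (x := Δf * τ i k) (by push_cast; rwa [← mul_assoc])
  refine ⟨hexp, ⟨m, by rw [← hm]; ring⟩, fun hτ => ⟨m, ?_⟩⟩
  field_simp
  linarith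

/-- For line-of-sight channels
`h_{i,k}^{(l)} = A_{i,k}·exp(−2π·i·f^{(l)}·τ_{i,k})` with `f1 ≠ f2` and
`Δf = f2 − f1`, if nonzero complex numbers `a_i, b_k` are such that the
constant vectors `u_i = (a_i, a_i)` and `v_k = (b_k, b_k)` (time-based IA)
satisfy the alignment equations for all `i ≠ k`, then for every `i ≠ k` one
has `exp(−2π·i·Δf·τ_{i,k}) = −1`; equivalently `2·Δf·τ_{i,k}` is an odd
integer, i.e. `Δf = (1 + 2n_{i,k})/(2τ_{i,k})` for some integer `n_{i,k}`
whenever `τ_{i,k} ≠ 0`. (Users indexed by `0, 1, 2`, subcarriers by `0, 1`.) -/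
theorem time_based_IA_spacing
    (τ : Fin 3 → Fin 3 → ℝ) (A : Fin 3 → Fin 3 → ℝ) (hA : ∀ i k, 0 < A i k)
    (f1 f2 : ℝ) (hf : f1 ≠ f2) (Δf : ℝ) (hΔf : Δf = f2 - f1)
    (h : Fin 3 → Fin 3 → Fin 2 → ℂ)
    (hdef : ∀ i k l, h i k l = (A i k : ℂ) *
      Complex.exp (-(2 * (Real.pi : ℂ) * Complex.I) *
        (if l = 0 then (f1 : ℂ) else (f2 : ℂ)) * (τ i k : ℂ)))
    (a b : Fin 3 → ℂ) (ha : ∀ i, a i ≠ 0) (hb : ∀ k, b k ≠ 0)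
    (halign : ∀ i k, i ≠ k →
      (starRingEnd ℂ) (a i) * h i k 0 * b k +
        (starRingEnd ℂ) (a i) * h i k 1 * b k = 0) :
    ∀ i k, i ≠ k →
      Complex.exp (-(2 * (Real.pi : ℂ) * Complex.I) * (Δf : ℂ) * (τ i k : ℂ)) = -1 ∧
      (∃ m : ℤ, 2 * Δf * τ i k = 2 * m + 1) ∧
      (τ i k ≠ 0 → ∃ m : ℤ, Δf = (1 + 2 * m) / (2 * τ i k)) :=
  time_based_IA_spacing_general τ A hA f1 f2 Δf hΔf h hdef a b ha hb halign
end

section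
/- Let (Ω, 𝔽, P) be a probability space and for each i ∈ {1,2,3} let (D_{i,l})_{l≥1} be random digits taking values in {0,1,...,9}, such that the entire family {D_{i,l} : i ∈ {1,2,3}, l ≥ 1} is mutually independent and each D_{i,l} is uniformly distributed on {0,...,9}. Define λ_i = Σ_{l≥1} D_{i,l}·10^{−l}. Then almost surely: for every ε > 0 there exists r ∈ ℕ such that |fract(10^r·λ_i) − 1/2| < ε simultaneously for all i ∈ {1,2,3}. -/
/-!
Write `x = 0.d₀d₁d₂…` in base `b`. Multiplying by `b ^ r` shifts the digits, so `fract (b ^ r * x)`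
is the number whose digits are `d_r d_{r+1} …`; if these start with the word `5 0 … 0` of length
`n` (in base ten), that number lies within `10⁻ⁿ` of `1/2`. For fixed `n`, the events "the three
digit sequences all read `5 0 … 0` on positions `[m n, m n + n)`" are independent in `m` and have
the same positive probability `10^(-3n)`, so by the second Borel–Cantelli lemma one of them occurs
almost surely; intersecting over the countably many `n` gives the theorem.
-/

open MeasureTheory ProbabilityTheory Filter Function
open scoped ENNReal

namespace Real

variable {b : ℕ}

theorem tsum_digit_mul_zpow_eq_ofDigits (d : ℕ → Fin b) :
    ∑' l : ℕ, ((d l : ℕ) : ℝ) * (b : ℝ) ^ (-(l : ℤ) - 1) = ofDigits d := by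
  refine tsum_congr fun l => ?_
  rw [ofDigitsTerm, ← zpow_natCast, ← zpow_neg]
  push_cast
  ring_nf

theorem ofDigits_pi_single_zero [NeZero b] (a : Fin b) :
    ofDigits (Pi.single 0 a : ℕ → Fin b) = a / b := by
  rw [ofDigits, tsum_eq_single 0 fun l hl => by simp [ofDigitsTerm, hl], ofDigitsTerm]
  simp [div_eq_mul_inv]

theorem abs_ofDigits_sub_div_le [NeZero b] {d : ℕ → Fin b} {a : Fin b} {n : ℕ}
    (h : ∀ i < n, d i = (Pi.single 0 a : ℕ → Fin b) i) :
    |ofDigits d - a / b| ≤ ((b : ℝ) ^ n)⁻¹ := by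
  simpa only [ofDigits_pi_single_zero] using abs_ofDigits_sub_ofDigits_le h

theorem fract_pow_mul_ofDigits (d : ℕ → Fin b) (r : ℕ) :
    Int.fract ((b : ℝ) ^ r * ofDigits d) = Int.fract (ofDigits fun i => d (i + r)) := by
  induction r generalizing d with
  | zero => simp
  | succ r ih =>
    have hb : (b : ℝ) ≠ 0 := by exact_mod_cast (Fin.pos (d 0)).ne'
    have hshift : (b : ℝ) * ofDigits d = (d 0 : ℕ) + ofDigits fun i => d (i + 1) := by
      rw [ofDigits_eq_sum_add_ofDigits d 1]
      simp only [Finset.range_one, ofDigitsTerm, Finset.sum_singleton, zero_add, pow_one]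
      field_simp
    have hint : (b : ℝ) ^ r * (d 0 : ℕ) = (b ^ r * d 0 : ℕ) := by push_cast; rfl
    rw [pow_succ, mul_assoc, hshift, mul_add, hint, Int.fract_natCast_add]
    exact ih fun i => d (i + 1)

theorem abs_fract_sub_half_of_mem_Icc {x : ℝ} (hx : x ∈ Set.Icc 0 1) :
    |Int.fract x - 1 / 2| = |x - 1 / 2| := by
  rcases hx.2.lt_or_eq with hlt | rfl
  · rw [Int.fract_eq_self.2 ⟨hx.1, hlt⟩]
  · norm_num

theorem abs_fract_pow_mul_ofDigits_sub_half_le (d : ℕ → Fin 10) {r n : ℕ}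
    (h : ∀ i < n, d (i + r) = (Pi.single 0 5 : ℕ → Fin 10) i) :
    |Int.fract ((10 : ℝ) ^ r * ofDigits d) - 1 / 2| ≤ ((10 : ℝ) ^ n)⁻¹ := by
  have hshifted := abs_ofDigits_sub_div_le h
  rw [← Nat.cast_ofNat (R := ℝ) (n := 10), fract_pow_mul_ofDigits,
    abs_fract_sub_half_of_mem_Icc ⟨ofDigits_nonneg _, ofDigits_le_one _⟩]
  norm_num at hshifted ⊢
  exact hshifted

end Real

namespace ProbabilityTheory

variable {Ω ι α : Type*} [MeasurableSpace Ω] [MeasurableSpace α] {P : Measure Ω}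
  {D : ι → Ω → α}

theorem iIndepFun.iIndepSet_biInter_preimage {κ : Type*} (hD : iIndepFun D P)
    (hmeas : ∀ p, Measurable (D p)) {blk : κ → Finset ι} (hblk : Pairwise (Disjoint on blk))
    {t : ι → Set α} (ht : ∀ p, MeasurableSet (t p)) :
    iIndepSet (fun m => ⋂ p ∈ blk m, D p ⁻¹' t p) P := by
  have hmeas_comap : ∀ p, MeasurableSet[MeasurableSpace.comap (D p) ‹_›] (D p ⁻¹' t p) :=
    fun p => ⟨t p, ht p, rfl⟩
  rw [iIndepSet_iff_meas_biInter fun m => (blk m).measurableSet_biInter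
    fun p _ => hmeas p (ht p)]
  intro S
  classical
  rw [← Finset.set_biInter_biUnion, hD.meas_biInter fun p _ => hmeas_comap p,
    Finset.prod_biUnion fun m _ m' _ hmm' => hblk hmm']
  exact Finset.prod_congr rfl fun m _ => (hD.meas_biInter fun p _ => hmeas_comap p).symm

theorem iIndepFun.ae_frequently_forall_mem (hD : iIndepFun D P)
    (hmeas : ∀ p, Measurable (D p)) {blk : ℕ → Finset ι} (hblk : Pairwise (Disjoint on blk))
    {t : ι → Set α} (ht : ∀ p, MeasurableSet (t p))
    (hsum : ∑' m, ∏ p ∈ blk m, P (D p ⁻¹' t p) = ∞) :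
    ∀ᵐ ω ∂P, ∃ᶠ m in atTop, ∀ p ∈ blk m, D p ω ∈ t p := by
  have := hD.isProbabilityMeasure
  have hB : ∀ m, MeasurableSet (⋂ p ∈ blk m, D p ⁻¹' t p) :=
    fun m => (blk m).measurableSet_biInter fun p _ => hmeas p (ht p)
  have hlimsup := measure_limsup_eq_one hB (hD.iIndepSet_biInter_preimage hmeas hblk ht) <| by
    simpa only [hD.meas_biInter fun p _ => ⟨t p, ht p, rfl⟩] using hsum
  filter_upwards [(mem_ae_iff_prob_eq_one (.measurableSet_limsup hB)).2 hlimsup] with ω hω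
  simpa only [Set.mem_iInter₂, Set.mem_preimage] using mem_limsup_iff_frequently_mem.1 hω

theorem iIndepFun.ae_exists_forall_eq_pattern [Fintype ι] [MeasurableSingletonClass α]
    {X : ι × ℕ → Ω → α} (hX : iIndepFun X P) (hmeas : ∀ p, Measurable (X p)) {q : ℝ≥0∞}
    (hq : q ≠ 0) (hprob : ∀ p a, q ≤ P {ω | X p ω = a}) (w : ι → ℕ → α) (n : ℕ) :
    ∀ᵐ ω ∂P, ∃ m, ∀ i, ∀ j < n, X (i, j + m * n) ω = w i j := by
  set blk : ℕ → Finset (ι × ℕ) := fun m => .univ ×ˢ .Ico (m * n) (m * n + n)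
  have hblk : Pairwise (Disjoint on blk) := by
    intro m m' hmm'
    refine Finset.disjoint_product.2 (.inr (Finset.disjoint_left.2 fun l hl hl' => ?_))
    simp only [Finset.mem_Ico] at hl hl'
    rcases hmm'.lt_or_gt with h | h <;> nlinarith
  have hsum : ∑' m, ∏ p ∈ blk m, P (X p ⁻¹' {w p.1 (p.2 % n)}) = ∞ := by
    refine top_unique <| (ENNReal.tsum_const_eq_top_of_ne_zero
      (pow_ne_zero (Fintype.card ι * n) hq)).symm.le.trans (ENNReal.tsum_le_tsum fun m => ?_)
    calc q ^ (Fintype.card ι * n) = ∏ p ∈ blk m, q := by simp [blk]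
      _ ≤ _ := Finset.prod_le_prod' fun p _ => hprob _ _
  filter_upwards [hX.ae_frequently_forall_mem hmeas hblk (fun p => measurableSet_singleton _)
    hsum] with ω hω
  obtain ⟨m, hm⟩ := hω.exists
  refine ⟨m, fun i j hj => ?_⟩
  have := hm (i, j + m * n) (by simp [blk]; omega)
  simpa [Nat.add_mul_mod_self_right, Nat.mod_eq_of_lt hj] using this

end ProbabilityTheory

theorem random_digits_fract_near_half_general
    {Ω : Type*} [MeasurableSpace Ω] (P : Measure Ω)
    (D : Fin 3 × ℕ → Ω → Fin 10)
    (hmeas : ∀ p, Measurable (D p))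
    (hindep : iIndepFun D P)
    (hunif : ∀ p d, P {ω | D p ω = d} = 1 / 10) :
    ∀ᵐ ω ∂P, ∀ ε : ℝ, 0 < ε → ∃ r : ℕ, ∀ i : Fin 3,
      |Int.fract ((10 : ℝ) ^ r *
          ∑' l : ℕ, ((D (i, l) ω : ℕ) : ℝ) * (10 : ℝ) ^ (-(l : ℤ) - 1)) - 1 / 2| < ε := by
  have hpattern : ∀ᵐ ω ∂P, ∀ n, ∃ m, ∀ i, ∀ j < n,
      D (i, j + m * n) ω = (Pi.single 0 5 : ℕ → Fin 10) j :=
    ae_all_iff.2 fun n => hindep.ae_exists_forall_eq_pattern hmeas (by simp)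
      (fun p a => (hunif p a).ge) _ n
  filter_upwards [hpattern] with ω hω ε hε
  obtain ⟨n, hn⟩ := exists_pow_lt_of_lt_one hε (by norm_num : (10⁻¹ : ℝ) < 1)
  obtain ⟨m, hm⟩ := hω n
  refine ⟨m * n, fun i => ?_⟩
  have hvalue := Real.tsum_digit_mul_zpow_eq_ofDigits fun l => D (i, l) ω
  rw [Nat.cast_ofNat] at hvalue
  rw [hvalue]
  calc _ ≤ ((10 : ℝ) ^ n)⁻¹ := Real.abs_fract_pow_mul_ofDigits_sub_half_le _ (hm i)
    _ < ε := by rwa [← inv_pow]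

/-- Let `(Ω, 𝔽, P)` be a probability space and, for `i ∈ {1,2,3}`
and positions `l`, let `D (i, l)` be random digits in `{0,…,9}` that are
mutually independent (over all `(i, l)`) and uniformly distributed. Define
`λ_i = ∑_l D(i,l)·10^{−(l+1)}` (the number whose `(l+1)`-st decimal digit is
`D(i,l)`). Then almost surely: for every `ε > 0` there exists `r ∈ ℕ` with
`|fract(10^r·λ_i) − 1/2| < ε` simultaneously for all `i`. -/
theorem random_digits_fract_near_half
    {Ω : Type*} [MeasurableSpace Ω] (P : Measure Ω) [IsProbabilityMeasure P]
    (D : Fin 3 × ℕ → Ω → Fin 10)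
    (hmeas : ∀ p, Measurable (D p))
    (hindep : iIndepFun D P)
    (hunif : ∀ p d, P {ω | D p ω = d} = 1 / 10) :
    ∀ᵐ ω ∂P, ∀ ε : ℝ, 0 < ε → ∃ r : ℕ, ∀ i : Fin 3,
      |Int.fract ((10 : ℝ) ^ r *
          ∑' l : ℕ, ((D (i, l) ω : ℕ) : ℝ) * (10 : ℝ) ^ (-(l : ℤ) - 1)) - 1 / 2| < ε :=
  random_digits_fract_near_half_general P D hmeas hindep hunif
end
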